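/- arXiv:2304.10835 — 3 statements merged into one kernel-verified Lean document; each statement's English description precedes it below -/
import Mathlib

section
/- Let γ ∈ ℂ. There exists η ∈ L¹([0,a†],ℂ), not a.e. zero, such that for a.e. a ∈ [0,a†] it holds −η(a) + ∫_0^{a†} β(â)Π0(â)η(â) dâ − ∫_0^{a} μ1(â)η(â) dâ = γ ∫_0^{a} η(â) dâ, if and only if K̂(γ) = 1. Moreover, any such η satisfies η(a) = α·exp(−γa − ∫_0^a μ1(s) ds) for a.e. a, where α := ∫_0^{a†} β(â)Π0(â)η(â) dâ ≠ 0. (This says that γ is an eigenvalue of the age operator K^a if and only if the characteristic equation 1 − K̂(γ) = 0 holds.) -/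
open MeasureTheory

/-- The natural survival probability `Π0(a) = exp(−∫_0^a μ0(s) ds)`. -/
noncomputable def Pi0 (μ0 : ℝ → ℝ) (a : ℝ) : ℝ :=
  Real.exp (-(∫ s in (0:ℝ)..a, μ0 s))

/-- The characteristic function
`K̂(γ) = ∫_0^{a†} β(a) Π0(a) exp(−∫_0^a μ1(s) ds − γ a) da`. -/
noncomputable def Khat (adag : ℝ) (β μ0 μ1 : ℝ → ℝ) (γ : ℂ) : ℂ :=
  ∫ a in (0:ℝ)..adag, ((β a * Pi0 μ0 a : ℝ) : ℂ) *
    Complex.exp (-((∫ s in (0:ℝ)..a, μ1 s : ℝ) : ℂ) - γ * a)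

/-- `η ∈ L¹([0,a†],ℂ)`, not a.e. zero, satisfies the age eigenvalue equation
`−η(a) + ∫_0^{a†} β Π0 η − ∫_0^a μ1 η = γ ∫_0^a η` for a.e. `a`. -/
def IsAgeEigenfunction (adag : ℝ) (β μ0 μ1 : ℝ → ℝ) (γ : ℂ) (η : ℝ → ℂ) : Prop :=
  IntegrableOn η (Set.Ioc 0 adag) ∧
  ¬ (η =ᵐ[volume.restrict (Set.Ioc 0 adag)] 0) ∧
  (∀ᵐ a ∂(volume.restrict (Set.Ioc 0 adag)),
    -η a + (∫ s in (0:ℝ)..adag, ((β s * Pi0 μ0 s : ℝ) : ℂ) * η s)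
      - (∫ s in (0:ℝ)..a, ((μ1 s : ℝ) : ℂ) * η s)
      = γ * ∫ s in (0:ℝ)..a, η s)

/-!
Write `k = μ1 + γ`. The eigenvalue equation says exactly that `η = α - ∫_0^a k η` a.e., with
`α = ∫_0^{a†} β Π0 η`: a linear Volterra equation. For its absolutely continuous right-hand side
`φ` the product `φ · exp (∫_0^a k)` has derivative zero a.e., so `η = α exp (-∫_0^a k)` a.e.
Substituting this back into the definition of `α` gives `α = α K̂(γ)`, and `α ≠ 0` because `η`
is not a.e. zero. Conversely, when `K̂(γ) = 1` the function `exp (-∫_0^a k)` solves the equation.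
-/

open Set Filter
open scoped NNReal

namespace AbsolutelyContinuousOnInterval

variable {X : Type*} [PseudoMetricSpace X] {f g : ℝ → X} {a b : ℝ}

theorem congr (hf : AbsolutelyContinuousOnInterval f a b) (hfg : EqOn f g (uIcc a b)) :
    AbsolutelyContinuousOnInterval g a b := by
  refine hf.congr' ?_
  rw [eventuallyEq_inf_principal_iff]
  filter_upwards with ⟨n, I⟩ hnI
  simp only [disjWithin, mem_ofPred_eq] at hnI
  exact Finset.sum_congr rfl fun i hi ↦ by rw [hfg (hnI.1 i hi).1, hfg (hnI.1 i hi).2]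

end AbsolutelyContinuousOnInterval

theorem LipschitzOnWith.comp_absolutelyContinuousOnInterval {X Y : Type*} [PseudoMetricSpace X]
    [PseudoMetricSpace Y] {g : X → Y} {K : ℝ≥0} {s : Set X} {f : ℝ → X} {a b : ℝ}
    (hg : LipschitzOnWith K g s) (hf : AbsolutelyContinuousOnInterval f a b)
    (hfs : MapsTo f (uIcc a b) s) :
    AbsolutelyContinuousOnInterval (g ∘ f) a b := by
  unfold AbsolutelyContinuousOnInterval at hf ⊢
  refine squeeze_zero' (Eventually.of_forall fun _ ↦ Finset.sum_nonneg fun _ _ ↦ dist_nonneg) ?_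
    (by simpa using hf.const_mul (K : ℝ))
  rw [eventually_inf_principal]
  filter_upwards with ⟨n, I⟩ hnI
  simp only [AbsolutelyContinuousOnInterval.disjWithin, mem_ofPred_eq] at hnI
  rw [Finset.mul_sum]
  gcongr with i hi
  exact hg.dist_le_mul _ (hfs (hnI.1 i hi).1) _ (hfs (hnI.1 i hi).2)

theorem IntervalIntegrable.absolutelyContinuousOnInterval_intervalIntegral_rclike
    {𝕜 : Type*} [RCLike 𝕜] {f : ℝ → 𝕜} {a b c : ℝ} (hf : IntervalIntegrable f volume a b)
    (hc : c ∈ uIcc a b) :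
    AbsolutelyContinuousOnInterval (fun x ↦ ∫ t in c..x, f t) a b := by
  have hofReal : LipschitzOnWith 1 (fun t : ℝ ↦ (t : 𝕜)) univ :=
    (RCLike.ofRealLI (K := 𝕜)).lipschitz.lipschitzOnWith
  have hre_int : IntervalIntegrable (fun x ↦ RCLike.re (f x)) volume a b := ⟨hf.1.re, hf.2.re⟩
  have him_int : IntervalIntegrable (fun x ↦ RCLike.im (f x)) volume a b := ⟨hf.1.im, hf.2.im⟩
  have hre := hofReal.comp_absolutelyContinuousOnInterval
    (hre_int.absolutelyContinuousOnInterval_intervalIntegral hc) (mapsTo_univ _ _)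
  have him := hofReal.comp_absolutelyContinuousOnInterval
    (him_int.absolutelyContinuousOnInterval_intervalIntegral hc) (mapsTo_univ _ _)
  refine (hre.fun_add (him.const_smul (RCLike.I : 𝕜))).congr fun x hx ↦ ?_
  have hcx : IntervalIntegrable f volume c x := hf.mono_set (uIcc_subset_uIcc hc hx)
  simp only [Function.comp_apply, intervalIntegral.intervalIntegral_re hcx,
    intervalIntegral.intervalIntegral_im hcx, smul_eq_mul, mul_comm (RCLike.I : 𝕜),
    RCLike.re_add_im]

theorem AbsolutelyContinuousOnInterval.cexp {f : ℝ → ℂ} {a b : ℝ}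
    (hf : AbsolutelyContinuousOnInterval f a b) :
    AbsolutelyContinuousOnInterval (fun x ↦ Complex.exp (f x)) a b := by
  obtain ⟨C, hC⟩ := hf.exists_bound
  obtain ⟨K, hK⟩ := (Complex.contDiff_exp (𝕜 := ℝ) (n := 1)).contDiffOn.exists_lipschitzOnWith
    one_ne_zero (convex_closedBall (0 : ℂ) C) (isCompact_closedBall 0 C)
  exact hK.comp_absolutelyContinuousOnInterval hf fun x hx ↦ mem_closedBall_zero_iff.2 (hC x hx)

noncomputable def expNegPrimitive (k : ℝ → ℂ) (x : ℝ) : ℂ :=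
  Complex.exp (-∫ s in (0 : ℝ)..x, k s)

section Volterra

variable {k : ℝ → ℂ} {b : ℝ}

theorem continuous_expNegPrimitive (hk : ∀ x y, IntervalIntegrable k volume x y) :
    Continuous (expNegPrimitive k) :=
  (intervalIntegral.continuous_primitive hk 0).neg.cexp

theorem absolutelyContinuousOnInterval_expNegPrimitive (hk : IntervalIntegrable k volume 0 b) :
    AbsolutelyContinuousOnInterval (expNegPrimitive k) 0 b :=
  (hk.absolutelyContinuousOnInterval_intervalIntegral_rclike left_mem_uIcc).fun_neg.cexp

theorem ae_hasDerivAt_expNegPrimitive (hk : IntervalIntegrable k volume 0 b) :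
    ∀ᵐ x, x ∈ uIcc 0 b → HasDerivAt (expNegPrimitive k) (-k x * expNegPrimitive k x) x := by
  filter_upwards [hk.ae_hasDerivAt_integral] with x hx hxb
  rw [mul_comm]
  exact (hx hxb 0 left_mem_uIcc).neg.cexp

theorem expNegPrimitive_eq_one_sub (hk : IntervalIntegrable k volume 0 b) {x : ℝ}
    (hx : x ∈ uIcc 0 b) :
    expNegPrimitive k x = 1 - ∫ s in (0 : ℝ)..x, k s * expNegPrimitive k s := by
  have he := absolutelyContinuousOnInterval_expNegPrimitive hk
  have hke : IntervalIntegrable (fun s ↦ k s * expNegPrimitive k s) volume 0 b :=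
    hk.mul_continuousOn he.continuousOn
  have hac : AbsolutelyContinuousOnInterval
      (fun x ↦ expNegPrimitive k x + ∫ s in (0 : ℝ)..x, k s * expNegPrimitive k s) 0 b :=
    he.fun_add (hke.absolutelyContinuousOnInterval_intervalIntegral_rclike left_mem_uIcc)
  have hderiv : ∀ᵐ y, y ∈ uIcc 0 b → HasDerivAt
      (fun x ↦ expNegPrimitive k x + ∫ s in (0 : ℝ)..x, k s * expNegPrimitive k s) 0 y := by
    filter_upwards [ae_hasDerivAt_expNegPrimitive hk, hke.ae_hasDerivAt_integral]
      with y hy hy' hyb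
    exact ((hy hyb).add (hy' hyb 0 left_mem_uIcc)).congr_deriv (by ring)
  obtain ⟨C, hC⟩ := hac.const_of_ae_hasDerivAt_zero hderiv
  have h0 := hC 0 left_mem_uIcc
  simp only [expNegPrimitive, intervalIntegral.integral_same, neg_zero, Complex.exp_zero,
    add_zero] at h0
  rw [eq_sub_iff_add_eq, hC x hx, ← h0]

theorem AbsolutelyContinuousOnInterval.eq_mul_expNegPrimitive {y : ℝ → ℂ}
    (hk : IntervalIntegrable k volume 0 b) (hy : AbsolutelyContinuousOnInterval y 0 b)
    (hy' : ∀ᵐ x, x ∈ uIcc 0 b → HasDerivAt y (-k x * y x) x) {x : ℝ} (hx : x ∈ uIcc 0 b) :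
    y x = y 0 * expNegPrimitive k x := by
  have hac : AbsolutelyContinuousOnInterval
      (fun x ↦ y x * Complex.exp (∫ s in (0 : ℝ)..x, k s)) 0 b :=
    hy.fun_smul (hk.absolutelyContinuousOnInterval_intervalIntegral_rclike left_mem_uIcc).cexp
  have hderiv : ∀ᵐ z, z ∈ uIcc 0 b → HasDerivAt
      (fun x ↦ y x * Complex.exp (∫ s in (0 : ℝ)..x, k s)) 0 z := by
    filter_upwards [hy', hk.ae_hasDerivAt_integral] with z hz hz' hzb
    exact ((hz hzb).mul (hz' hzb 0 left_mem_uIcc).cexp).congr_deriv (by ring)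
  obtain ⟨C, hC⟩ := hac.const_of_ae_hasDerivAt_zero hderiv
  have h0 := hC 0 left_mem_uIcc
  have hx' := hC x hx
  simp only [intervalIntegral.integral_same, Complex.exp_zero, mul_one] at h0 hx'
  rw [expNegPrimitive, Complex.exp_neg, h0, ← hx', mul_inv_cancel_right₀ (Complex.exp_ne_zero _)]

theorem ae_eq_mul_expNegPrimitive_of_ae_eq_sub_integral {η : ℝ → ℂ} {α : ℂ}
    (hk : IntervalIntegrable k volume 0 b)
    (hkη : IntervalIntegrable (fun s ↦ k s * η s) volume 0 b)
    (hη : ∀ᵐ x, x ∈ uIcc 0 b → η x = α - ∫ s in (0 : ℝ)..x, k s * η s) :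
    ∀ᵐ x, x ∈ uIcc 0 b → η x = α * expNegPrimitive k x := by
  set φ : ℝ → ℂ := fun x ↦ α - ∫ s in (0 : ℝ)..x, k s * η s
  have hφ : AbsolutelyContinuousOnInterval φ 0 b :=
    (LipschitzWith.const α).lipschitzOnWith.absolutelyContinuousOnInterval.fun_sub
      (hkη.absolutelyContinuousOnInterval_intervalIntegral_rclike left_mem_uIcc)
  have hφ' : ∀ᵐ x, x ∈ uIcc 0 b → HasDerivAt φ (-k x * φ x) x := by
    filter_upwards [hη, hkη.ae_hasDerivAt_integral] with x hx hx' hxb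
    rw [show φ x = η x from (hx hxb).symm, neg_mul]
    exact (hx' hxb 0 left_mem_uIcc).const_sub α
  filter_upwards [hη] with x hx hxb
  rw [hx hxb]
  simpa [φ] using hφ.eq_mul_expNegPrimitive hk hφ' hxb

end Volterra

theorem IntervalIntegrable.ofReal {f : ℝ → ℝ} {μ : Measure ℝ} {a b : ℝ}
    (hf : IntervalIntegrable f μ a b) : IntervalIntegrable (fun x ↦ (f x : ℂ)) μ a b :=
  ⟨hf.1.ofReal, hf.2.ofReal⟩

theorem Measurable.intervalIntegrable_of_bounded {f : ℝ → ℝ} (hf : Measurable f)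
    (hbdd : ∃ C, ∀ x, |f x| ≤ C) (a b : ℝ) : IntervalIntegrable f volume a b := by
  obtain ⟨C, hC⟩ := hbdd
  exact intervalIntegrable_iff.2 <| Measure.integrableOn_of_bounded measure_Ioc_lt_top.ne
    hf.aestronglyMeasurable (M := C) (Eventually.of_forall hC)

theorem MeasureTheory.IntegrableOn.ofReal_mul_of_bounded {f : ℝ → ℝ} {g : ℝ → ℂ} {s : Set ℝ}
    (hf : Measurable f) (hbdd : ∃ C, ∀ x, |f x| ≤ C) (hg : IntegrableOn g s) :
    IntegrableOn (fun x ↦ (f x : ℂ) * g x) s := by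
  obtain ⟨C, hC⟩ := hbdd
  exact hg.bdd_mul (Complex.measurable_ofReal.comp hf).aestronglyMeasurable
    (Eventually.of_forall fun x ↦ by simpa using hC x)

theorem IntervalIntegrable.ofReal_add_const {f : ℝ → ℝ} {a b : ℝ}
    (hf : IntervalIntegrable f volume a b) (c : ℂ) :
    IntervalIntegrable (fun x ↦ (f x : ℂ) + c) volume a b :=
  hf.ofReal.add intervalIntegrable_const

theorem ae_restrict_Ioc_iff_ae_imp_mem_Icc {a b : ℝ} {P : ℝ → Prop} :
    (∀ᵐ x ∂volume.restrict (Ioc a b), P x) ↔ ∀ᵐ x, x ∈ Icc a b → P x := by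
  rw [Measure.restrict_congr_set Ioc_ae_eq_Icc, ae_restrict_iff' measurableSet_Icc]

/-- The paper's `α`. -/
noncomputable def birthRate (adag : ℝ) (β μ0 : ℝ → ℝ) (η : ℝ → ℂ) : ℂ :=
  ∫ s in (0 : ℝ)..adag, ((β s * Pi0 μ0 s : ℝ) : ℂ) * η s

section Age

variable {adag : ℝ} {β μ0 μ1 : ℝ → ℝ} {γ : ℂ} {η : ℝ → ℂ}

theorem expNegPrimitive_ofReal_add_const {a : ℝ} (hμ1 : IntervalIntegrable μ1 volume 0 a) :
    expNegPrimitive (fun s ↦ (μ1 s : ℂ) + γ) a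
      = Complex.exp (-γ * a - ((∫ s in (0 : ℝ)..a, μ1 s : ℝ) : ℂ)) := by
  rw [expNegPrimitive, intervalIntegral.integral_add hμ1.ofReal intervalIntegrable_const,
    intervalIntegral.integral_ofReal, intervalIntegral.integral_const, Complex.real_smul]
  congr 1
  push_cast
  ring

theorem ageEquation_iff {a : ℝ} (α : ℂ)
    (hμ1η : IntervalIntegrable (fun s ↦ (μ1 s : ℂ) * η s) volume 0 a)
    (hη : IntervalIntegrable η volume 0 a) :
    -η a + α - (∫ s in (0 : ℝ)..a, (μ1 s : ℂ) * η s) = γ * ∫ s in (0 : ℝ)..a, η s ↔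
      η a = α - ∫ s in (0 : ℝ)..a, ((μ1 s : ℂ) + γ) * η s := by
  simp_rw [add_mul]
  rw [intervalIntegral.integral_add hμ1η (hη.const_mul γ), intervalIntegral.integral_const_mul]
  constructor <;> intro h <;> linear_combination -h

theorem khat_eq_birthRate_expNegPrimitive (hμ1 : ∀ x y, IntervalIntegrable μ1 volume x y) :
    Khat adag β μ0 μ1 γ = birthRate adag β μ0 (expNegPrimitive fun s ↦ (μ1 s : ℂ) + γ) := by
  refine intervalIntegral.integral_congr fun a _ ↦ ?_
  rw [expNegPrimitive_ofReal_add_const (hμ1 0 a)]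
  congr 2
  ring

theorem IsAgeEigenfunction.ae_eq_birthRate_mul_expNegPrimitive (hadag : 0 ≤ adag)
    (hμ1 : Measurable μ1) (hμ1bdd : ∃ C, ∀ a, |μ1 a| ≤ C)
    (hη : IsAgeEigenfunction adag β μ0 μ1 γ η) :
    η =ᵐ[volume.restrict (Ioc 0 adag)]
      fun a ↦ birthRate adag β μ0 η * expNegPrimitive (fun s ↦ (μ1 s : ℂ) + γ) a := by
  obtain ⟨hint, -, heq⟩ := hη
  have hII {f : ℝ → ℂ} (hf : IntegrableOn f (Ioc 0 adag)) {a : ℝ} (ha : a ∈ Icc 0 adag) :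
      IntervalIntegrable f volume 0 a :=
    (intervalIntegrable_iff_integrableOn_Ioc_of_le ha.1).2 (hf.mono_set (Ioc_subset_Ioc_right ha.2))
  have hμ1η := hint.ofReal_mul_of_bounded hμ1 hμ1bdd
  have hkη : IntegrableOn (fun s ↦ ((μ1 s : ℂ) + γ) * η s) (Ioc 0 adag) := by
    simp_rw [add_mul]
    exact hμ1η.add (hint.const_mul γ)
  rw [ae_restrict_Ioc_iff_ae_imp_mem_Icc] at heq
  refine ae_restrict_Ioc_iff_ae_imp_mem_Icc.2 ?_
  rw [← uIcc_of_le hadag]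
  refine ae_eq_mul_expNegPrimitive_of_ae_eq_sub_integral
    ((hμ1.intervalIntegrable_of_bounded hμ1bdd 0 adag).ofReal_add_const γ)
    (hII hkη ⟨hadag, le_rfl⟩) ?_
  filter_upwards [heq] with a ha hmem
  rw [uIcc_of_le hadag] at hmem
  exact (ageEquation_iff _ (hII hμ1η hmem) (hII hint hmem)).1 (ha hmem)

theorem IsAgeEigenfunction.birthRate_ne_zero (hadag : 0 ≤ adag) (hμ1 : Measurable μ1)
    (hμ1bdd : ∃ C, ∀ a, |μ1 a| ≤ C) (hη : IsAgeEigenfunction adag β μ0 μ1 γ η) :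
    birthRate adag β μ0 η ≠ 0 := by
  intro h0
  apply hη.2.1
  filter_upwards [hη.ae_eq_birthRate_mul_expNegPrimitive hadag hμ1 hμ1bdd] with a ha
  simp [ha, h0]

theorem IsAgeEigenfunction.khat_eq_one (hadag : 0 ≤ adag) (hμ1 : Measurable μ1)
    (hμ1bdd : ∃ C, ∀ a, |μ1 a| ≤ C) (hη : IsAgeEigenfunction adag β μ0 μ1 γ η) :
    Khat adag β μ0 μ1 γ = 1 := by
  set α := birthRate adag β μ0 η
  have hηe := (ae_restrict_iff' measurableSet_Ioc).1
    (hη.ae_eq_birthRate_mul_expNegPrimitive hadag hμ1 hμ1bdd)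
  refine mul_left_cancel₀ (hη.birthRate_ne_zero hadag hμ1 hμ1bdd) ?_
  calc α * Khat adag β μ0 μ1 γ
      = birthRate adag β μ0 fun a ↦ α * expNegPrimitive (fun s ↦ (μ1 s : ℂ) + γ) a := by
        rw [khat_eq_birthRate_expNegPrimitive (hμ1.intervalIntegrable_of_bounded hμ1bdd),
          birthRate, birthRate, ← intervalIntegral.integral_const_mul]
        congr 1 with a
        ring
    _ = α := by
        refine (intervalIntegral.integral_congr_ae ?_).symm
        filter_upwards [hηe] with a ha hmem
        rw [ha (uIoc_of_le hadag ▸ hmem)]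
    _ = α * 1 := (mul_one α).symm

theorem isAgeEigenfunction_expNegPrimitive (hadag : 0 < adag)
    (hμ1 : ∀ x y, IntervalIntegrable μ1 volume x y) (hK : Khat adag β μ0 μ1 γ = 1) :
    IsAgeEigenfunction adag β μ0 μ1 γ (expNegPrimitive fun s ↦ (μ1 s : ℂ) + γ) := by
  have hk a b := (hμ1 a b).ofReal_add_const γ
  have he := continuous_expNegPrimitive hk
  refine ⟨he.integrableOn_Ioc, fun h0 ↦ ?_, ?_⟩
  · have : (ae (volume.restrict (Ioc 0 adag))).NeBot := by
      rw [ae_neBot, Ne, Measure.restrict_eq_zero, Real.volume_Ioc, ENNReal.ofReal_eq_zero, not_le]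
      linarith
    obtain ⟨a, ha⟩ := h0.exists
    exact Complex.exp_ne_zero _ ha
  · have hα := (khat_eq_birthRate_expNegPrimitive hμ1).symm.trans hK
    rw [birthRate] at hα
    rw [ae_restrict_Ioc_iff_ae_imp_mem_Icc]
    filter_upwards with a ha
    rw [hα,
      ageEquation_iff 1 ((hμ1 0 a).ofReal.mul_continuousOn he.continuousOn)
        (he.intervalIntegrable 0 a)]
    exact expNegPrimitive_eq_one_sub (hk 0 adag) (uIcc_of_le hadag.le ▸ ha)

end Age

theorem age_operator_characteristic_equation_general
    (adag : ℝ) (hadag : 0 < adag) (β μ0 μ1 : ℝ → ℝ)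
    (hμ1meas : Measurable μ1) (hμ1nonneg : ∀ a, 0 ≤ μ1 a) (hμ1bdd : ∃ C, ∀ a, μ1 a ≤ C)
    (γ : ℂ) :
    ((∃ η : ℝ → ℂ, IsAgeEigenfunction adag β μ0 μ1 γ η) ↔ Khat adag β μ0 μ1 γ = 1) ∧
    (∀ η : ℝ → ℂ, IsAgeEigenfunction adag β μ0 μ1 γ η →
      (∫ s in (0:ℝ)..adag, ((β s * Pi0 μ0 s : ℝ) : ℂ) * η s) ≠ 0 ∧
      η =ᵐ[volume.restrict (Set.Ioc 0 adag)] fun a =>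
        (∫ s in (0:ℝ)..adag, ((β s * Pi0 μ0 s : ℝ) : ℂ) * η s) *
          Complex.exp (-γ * a - ((∫ s in (0:ℝ)..a, μ1 s : ℝ) : ℂ))) := by
  have hμ1abs : ∃ C, ∀ a, |μ1 a| ≤ C := by
    obtain ⟨C, hC⟩ := hμ1bdd
    exact ⟨C, fun a ↦ (abs_of_nonneg (hμ1nonneg a)).trans_le (hC a)⟩
  have hμ1int := hμ1meas.intervalIntegrable_of_bounded hμ1abs
  refine ⟨⟨fun ⟨η, hη⟩ ↦ hη.khat_eq_one hadag.le hμ1meas hμ1abs,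
    fun hK ↦ ⟨_, isAgeEigenfunction_expNegPrimitive hadag hμ1int hK⟩⟩,
    fun η hη ↦ ⟨hη.birthRate_ne_zero hadag.le hμ1meas hμ1abs, ?_⟩⟩
  filter_upwards [hη.ae_eq_birthRate_mul_expNegPrimitive hadag.le hμ1meas hμ1abs] with a ha
  rw [ha, expNegPrimitive_ofReal_add_const (hμ1int 0 a), birthRate]

/-- `γ` is an eigenvalue of the age operator `K^a` (i.e. the eigenvalue
equation has a nonzero `L¹` solution `η`) if and only if the characteristic equation
`K̂(γ) = 1` holds; moreover any such `η` is a.e. of the form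
`η(a) = α exp(−γa − ∫_0^a μ1)` with `α = ∫_0^{a†} β Π0 η ≠ 0`. -/
theorem age_operator_characteristic_equation
    (adag : ℝ) (hadag : 0 < adag) (β μ0 μ1 : ℝ → ℝ)
    (hβmeas : Measurable β) (hβnonneg : ∀ a, 0 ≤ β a) (hβbdd : ∃ C, ∀ a, β a ≤ C)
    (hμ0pos : ∀ a, 0 < μ0 a)
    (hμ0loc : ∀ b, 0 ≤ b → b < adag → IntegrableOn μ0 (Set.Icc 0 b))
    (hμ0div : ¬ IntegrableOn μ0 (Set.Ico 0 adag))
    (hμ1meas : Measurable μ1) (hμ1nonneg : ∀ a, 0 ≤ μ1 a) (hμ1bdd : ∃ C, ∀ a, μ1 a ≤ C)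
    (γ : ℂ) :
    ((∃ η : ℝ → ℂ, IsAgeEigenfunction adag β μ0 μ1 γ η) ↔ Khat adag β μ0 μ1 γ = 1) ∧
    (∀ η : ℝ → ℂ, IsAgeEigenfunction adag β μ0 μ1 γ η →
      (∫ s in (0:ℝ)..adag, ((β s * Pi0 μ0 s : ℝ) : ℂ) * η s) ≠ 0 ∧
      η =ᵐ[volume.restrict (Set.Ioc 0 adag)] fun a =>
        (∫ s in (0:ℝ)..adag, ((β s * Pi0 μ0 s : ℝ) : ℂ) * η s) *
          Complex.exp (-γ * a - ((∫ s in (0:ℝ)..a, μ1 s : ℝ) : ℂ))) :=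
  age_operator_characteristic_equation_general adag hadag β μ0 μ1 hμ1meas hμ1nonneg hμ1bdd γ
end

section
/- Let d > 0, let γ0 ∈ ℝ satisfy K̂(γ0) = 1, and let g0 ∈ L²(Ω,ℝ), not a.e. zero, satisfy J^x g0 = θ0 g0 for some θ0 ∈ ℝ. Set λ0 := γ0 + d(θ0 − 1) and φ0(a,x) := exp(−γ0 a − ∫_0^a μ1(s) ds) g0(x). Then φ0(0,·) = ∫_0^{a†} β(a)Π0(a)φ0(a,·) da, and for every a ∈ [0,a†], ∂_a φ0(a,·) = d(J^x φ0(a,·) − φ0(a,·)) − μ1(a)φ0(a,·) − λ0 φ0(a,·) in L²(Ω,ℝ); that is, φ0 is an eigenfunction of the generator with eigenvalue λ0. Moreover, if g0 > 0 a.e. in Ω, then φ0(a,·) > 0 a.e. for every a ∈ [0,a†], and the age-integrated function ψ0(a,x) := (∫_0^a exp(−γ0 â − ∫_0^â μ1(s) ds) dâ) g0(x) is positive a.e. for every a ∈ (0,a†]. -/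
open MeasureTheory

/-!
The eigenfunction separates variables: `φ0(a,x) = ageProfile γ0 μ1 a · g0(x)`. Since
`J^x g0 = θ0 g0`, the generator acts on `φ0(a,·)` as multiplication by the scalar
`d(θ0 − 1) − μ1(a) − λ0 = −γ0 − μ1(a)`, which is exactly the logarithmic derivative of the
age profile. At a real argument `K̂` is the real integral of `β Π0` against the age profile,
so `K̂(γ0) = 1` is the birth condition. Positivity is inherited from `g0`, as the profile and
its integrals over nondegenerate intervals are positive.
-/

noncomputable def ageProfile (γ : ℝ) (μ : ℝ → ℝ) (a : ℝ) : ℝ :=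
  Real.exp (-γ * a - ∫ r in (0:ℝ)..a, μ r)

theorem ageProfile_zero (γ : ℝ) (μ : ℝ → ℝ) : ageProfile γ μ 0 = 1 := by
  simp [ageProfile]

theorem ageProfile_pos (γ : ℝ) (μ : ℝ → ℝ) (a : ℝ) : 0 < ageProfile γ μ a :=
  Real.exp_pos _

theorem hasDerivAt_ageProfile (γ : ℝ) {μ : ℝ → ℝ} (hμ : Continuous μ) (a : ℝ) :
    HasDerivAt (ageProfile γ μ) ((-γ - μ a) * ageProfile γ μ a) a := by
  have hprimitive : HasDerivAt (fun s => ∫ r in (0:ℝ)..s, μ r) (μ a) a :=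
    intervalIntegral.integral_hasDerivAt_right (hμ.intervalIntegrable 0 a)
      hμ.stronglyMeasurable.stronglyMeasurableAtFilter hμ.continuousAt
  have hexponent := ((hasDerivAt_id a).const_mul (-γ)).sub hprimitive
  exact hexponent.exp.congr_deriv (by simp only [ageProfile, id, Pi.sub_apply]; ring)

theorem continuous_ageProfile (γ : ℝ) {μ : ℝ → ℝ} (hμ : Continuous μ) :
    Continuous (ageProfile γ μ) :=
  continuous_iff_continuousAt.mpr fun a => (hasDerivAt_ageProfile γ hμ a).continuousAt

theorem integral_ageProfile_pos (γ : ℝ) {μ : ℝ → ℝ} (hμ : Continuous μ) {a : ℝ} (ha : 0 < a) :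
    0 < ∫ s in (0:ℝ)..a, ageProfile γ μ s :=
  intervalIntegral.intervalIntegral_pos_of_pos_on
    ((continuous_ageProfile γ hμ).intervalIntegrable 0 a) (fun s _ => ageProfile_pos γ μ s) ha

theorem Khat_ofReal (adag : ℝ) (β μ0 μ1 : ℝ → ℝ) (γ : ℝ) :
    Khat adag β μ0 μ1 γ = ((∫ a in (0:ℝ)..adag, β a * Pi0 μ0 a * ageProfile γ μ1 a : ℝ) : ℂ) := by
  rw [Khat, ← intervalIntegral.integral_ofReal]
  refine intervalIntegral.integral_congr fun a _ => ?_
  simp only [ageProfile, Complex.ofReal_mul, Complex.ofReal_exp]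
  push_cast
  ring_nf

theorem nonlocal_generator_smul_eigenvector {E : Type*} [AddCommGroup E] [Module ℝ E]
    (T : E →ₗ[ℝ] E) {θ : ℝ} {g : E} (hg : T g = θ • g) (c d m γ : ℝ) :
    d • (T (c • g) - c • g) - m • (c • g) - (γ + d * (θ - 1)) • (c • g) =
      ((-γ - m) * c) • g := by
  rw [T.map_smul, hg]
  module

theorem MeasureTheory.Lp.ae_pos_smul {α : Type*} [MeasurableSpace α] {μ : Measure α}
    {p : ENNReal} {c : ℝ} (hc : 0 < c) {f : Lp ℝ p μ} (hf : ∀ᵐ x ∂μ, 0 < f x) :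
    ∀ᵐ x ∂μ, 0 < (c • f : Lp ℝ p μ) x := by
  filter_upwards [hf, Lp.coeFn_smul c f] with x hfx hsmul
  rw [hsmul]
  exact mul_pos hc hfx

theorem principal_eigenfunction_dirichlet_general
    {n : ℕ} (Ω : Set (EuclideanSpace ℝ (Fin n)))
    (T : Lp ℝ 2 (volume.restrict Ω) →L[ℝ] Lp ℝ 2 (volume.restrict Ω))
    (adag : ℝ) (β μ0 μ1 : ℝ → ℝ)
    (hμ1cont : Continuous μ1)
    (d : ℝ)
    (γ0 : ℝ) (hγ0 : Khat adag β μ0 μ1 (γ0 : ℂ) = 1)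
    (θ0 : ℝ) (G0 : Lp ℝ 2 (volume.restrict Ω))
    (hG0eig : T G0 = θ0 • G0) :
    -- birth condition
    ((Real.exp (-γ0 * 0 - ∫ s in (0:ℝ)..(0:ℝ), μ1 s)) • G0 =
        ∫ a in (0:ℝ)..adag, (β a * Pi0 μ0 a) •
          ((Real.exp (-γ0 * a - ∫ s in (0:ℝ)..a, μ1 s)) • G0)) ∧
    -- the abstract ODE: ∂_a φ0(a,·) = d(J^x φ0 − φ0) − μ1 φ0 − λ0 φ0
    (∀ a ∈ Set.Icc (0:ℝ) adag,
      HasDerivAt (fun s : ℝ => (Real.exp (-γ0 * s - ∫ r in (0:ℝ)..s, μ1 r)) • G0)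
        (d • (T ((Real.exp (-γ0 * a - ∫ r in (0:ℝ)..a, μ1 r)) • G0)
              - (Real.exp (-γ0 * a - ∫ r in (0:ℝ)..a, μ1 r)) • G0)
          - μ1 a • ((Real.exp (-γ0 * a - ∫ r in (0:ℝ)..a, μ1 r)) • G0)
          - (γ0 + d * (θ0 - 1)) • ((Real.exp (-γ0 * a - ∫ r in (0:ℝ)..a, μ1 r)) • G0))
        a) ∧
    -- positivity of φ0(a,·) for a.e. positive g0
    ((∀ᵐ x ∂(volume.restrict Ω), 0 < G0 x) →
      (∀ a ∈ Set.Icc (0:ℝ) adag, ∀ᵐ x ∂(volume.restrict Ω),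
        0 < ((Real.exp (-γ0 * a - ∫ r in (0:ℝ)..a, μ1 r)) • G0 :
              Lp ℝ 2 (volume.restrict Ω)) x) ∧
      -- positivity of the age-integrated eigenfunction ψ0 on (0,a†]
      (∀ a ∈ Set.Ioc (0:ℝ) adag, ∀ᵐ x ∂(volume.restrict Ω),
        0 < ((∫ s in (0:ℝ)..a, Real.exp (-γ0 * s - ∫ r in (0:ℝ)..s, μ1 r)) • G0 :
              Lp ℝ 2 (volume.restrict Ω)) x)) := by
  have hbirth : ∫ a in (0:ℝ)..adag, β a * Pi0 μ0 a * ageProfile γ0 μ1 a = 1 := by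
    exact_mod_cast (Khat_ofReal adag β μ0 μ1 γ0).symm.trans hγ0
  refine ⟨?_, fun a _ => ?_, fun hpos => ⟨fun a _ => ?_, fun a ha => ?_⟩⟩
  · change ageProfile γ0 μ1 0 • G0 = ∫ a in (0:ℝ)..adag, (β a * Pi0 μ0 a) • ageProfile γ0 μ1 a • G0
    simp only [smul_smul, intervalIntegral.integral_smul_const, hbirth, ageProfile_zero]
  · refine ((hasDerivAt_ageProfile γ0 hμ1cont a).smul_const G0).congr_deriv ?_
    exact (nonlocal_generator_smul_eigenvector T.toLinearMap hG0eig _ d (μ1 a) γ0).symm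
  · exact Lp.ae_pos_smul (ageProfile_pos γ0 μ1 a) hpos
  · exact Lp.ae_pos_smul (integral_ageProfile_pos γ0 hμ1cont ha.1) hpos

/-- If `K̂(γ0) = 1` and `J^x g0 = θ0 g0`, then
`φ0(a,x) = exp(−γ0 a − ∫_0^a μ1) g0(x)` is an eigenfunction of the generator with
eigenvalue `λ0 = γ0 + d(θ0 − 1)`: it satisfies the birth condition and the abstract
ODE; moreover positivity of `g0` yields positivity of `φ0(a,·)` and of the
age-integrated eigenfunction `ψ0`. Here `T` represents `J^x` on `L²(Ω,ℝ)`. -/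
theorem principal_eigenfunction_dirichlet
    {n : ℕ} (Ω : Set (EuclideanSpace ℝ (Fin n)))
    (hΩne : Ω.Nonempty) (hΩo : IsOpen Ω) (hΩb : Bornology.IsBounded Ω)
    (hΩconn : IsConnected Ω)
    (J : EuclideanSpace ℝ (Fin n) → ℝ)
    (hJcont : Continuous J) (hJsupp : HasCompactSupport J)
    (hJnonneg : ∀ x, 0 ≤ J x) (hJsymm : ∀ x, J (-x) = J x)
    (hJint : ∫ x, J x = 1) (hJ0 : 0 < J 0)
    (T : Lp ℝ 2 (volume.restrict Ω) →L[ℝ] Lp ℝ 2 (volume.restrict Ω))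
    (hT : ∀ g : Lp ℝ 2 (volume.restrict Ω),
      T g =ᵐ[volume.restrict Ω] fun x => ∫ y in Ω, J (x - y) * g y)
    (adag : ℝ) (hadag : 0 < adag) (β μ0 μ1 : ℝ → ℝ)
    (hβmeas : Measurable β) (hβnonneg : ∀ a, 0 ≤ β a) (hβbdd : ∃ C, ∀ a, β a ≤ C)
    (hμ0pos : ∀ a, 0 < μ0 a)
    (hμ0loc : ∀ b, 0 ≤ b → b < adag → IntegrableOn μ0 (Set.Icc 0 b))
    (hμ0div : ¬ IntegrableOn μ0 (Set.Ico 0 adag))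
    (hμ1cont : Continuous μ1) (hμ1nonneg : ∀ a, 0 ≤ μ1 a)
    (d : ℝ) (hd : 0 < d)
    (γ0 : ℝ) (hγ0 : Khat adag β μ0 μ1 (γ0 : ℂ) = 1)
    (θ0 : ℝ) (G0 : Lp ℝ 2 (volume.restrict Ω)) (hG0ne : G0 ≠ 0)
    (hG0eig : T G0 = θ0 • G0) :
    -- birth condition
    ((Real.exp (-γ0 * 0 - ∫ s in (0:ℝ)..(0:ℝ), μ1 s)) • G0 =
        ∫ a in (0:ℝ)..adag, (β a * Pi0 μ0 a) •
          ((Real.exp (-γ0 * a - ∫ s in (0:ℝ)..a, μ1 s)) • G0)) ∧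
    -- the abstract ODE: ∂_a φ0(a,·) = d(J^x φ0 − φ0) − μ1 φ0 − λ0 φ0
    (∀ a ∈ Set.Icc (0:ℝ) adag,
      HasDerivAt (fun s : ℝ => (Real.exp (-γ0 * s - ∫ r in (0:ℝ)..s, μ1 r)) • G0)
        (d • (T ((Real.exp (-γ0 * a - ∫ r in (0:ℝ)..a, μ1 r)) • G0)
              - (Real.exp (-γ0 * a - ∫ r in (0:ℝ)..a, μ1 r)) • G0)
          - μ1 a • ((Real.exp (-γ0 * a - ∫ r in (0:ℝ)..a, μ1 r)) • G0)
          - (γ0 + d * (θ0 - 1)) • ((Real.exp (-γ0 * a - ∫ r in (0:ℝ)..a, μ1 r)) • G0))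
        a) ∧
    -- positivity of φ0(a,·) for a.e. positive g0
    ((∀ᵐ x ∂(volume.restrict Ω), 0 < G0 x) →
      (∀ a ∈ Set.Icc (0:ℝ) adag, ∀ᵐ x ∂(volume.restrict Ω),
        0 < ((Real.exp (-γ0 * a - ∫ r in (0:ℝ)..a, μ1 r)) • G0 :
              Lp ℝ 2 (volume.restrict Ω)) x) ∧
      -- positivity of the age-integrated eigenfunction ψ0 on (0,a†]
      (∀ a ∈ Set.Ioc (0:ℝ) adag, ∀ᵐ x ∂(volume.restrict Ω),
        0 < ((∫ s in (0:ℝ)..a, Real.exp (-γ0 * s - ∫ r in (0:ℝ)..s, μ1 r)) • G0 :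
              Lp ℝ 2 (volume.restrict Ω)) x)) :=
  principal_eigenfunction_dirichlet_general Ω T adag β μ0 μ1 hμ1cont d γ0 hγ0 θ0 G0 hG0eig
end

section
/- Let N ∈ ℕ and let γ ∈ ℂ be such that the collocation problem with right-hand side α = 1 (find a complex polynomial q_N of degree at most N−1 with q_N(a_i) + ∫_0^{a_i}(γ+μ1(s))q_N(s) ds = 1 for i = 1,…,N) admits a unique solution q_N(·;γ,1). Then γ is an eigenvalue of the N×N matrix K_N if and only if ∫_0^{a†} β(a)Π0(a) q_N(a;γ,1) da = 1, i.e., if and only if the discrete characteristic equation 1 − K̂_N(γ) = 0 holds. -/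
/-!
A vector `v ∈ ℂ^N` corresponds to the polynomial `Q v = Σ_h v_h ℓ'_{N,h}`: its primitive
vanishing at `0` interpolates `0, v_1, …, v_N` at `a_0, …, a_N`, so `Q` is a linear bijection
onto the polynomials of degree `< N` with inverse `q ↦ (∫_0^{a_i} q)_i`. Through `Q`, the
equation `K_N v = γ v` says exactly that `Q v` solves the collocation problem with right-hand
side `∫ β Π0 (Q v)`. If a nonzero `q` does so, uniqueness forces `∫ β Π0 q ≠ 0` (otherwise
`q_N + q` is a second solution) and then `q / ∫ β Π0 q = q_N`, whence `∫ β Π0 q_N = 1`;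
conversely, that identity makes `q_N` itself such a `q`.
-/

open MeasureTheory

/-- The Chebyshev zero nodes `a_i = (a†/2)(1 + cos((2i−1)π/(2N)))`, `i = 1,…,N`,
in `[0,a†]`. -/
noncomputable def chebNode (adag : ℝ) (N : ℕ) (i : ℕ) : ℝ :=
  (adag / 2) * (1 + Real.cos ((2 * (i : ℝ) - 1) * Real.pi / (2 * (N : ℝ))))

/-- The collocation nodes `a_0 = 0, a_1, …, a_N`. -/
noncomputable def allNodes (adag : ℝ) (N : ℕ) (j : ℕ) : ℝ :=
  if j = 0 then 0 else chebNode adag N j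

/-- The Lagrange basis polynomial `ℓ_{N,h}` of degree `N` for the nodes
`a_0, a_1, …, a_N`. -/
noncomputable def lagrangeBasisPoly (adag : ℝ) (N : ℕ) (h : ℕ) : Polynomial ℝ :=
  Lagrange.basis (Finset.range (N + 1)) (allNodes adag N) h

/-- The collocation matrix `K_N` with entries
`(K_N)_{i,h} = −ℓ'_{N,h}(a_i) + ∫_0^{a†} β Π0 ℓ'_{N,h} − ∫_0^{a_i} μ1 ℓ'_{N,h}`. -/
noncomputable def collocationMatrix (adag : ℝ) (β μ0 μ1 : ℝ → ℝ) (N : ℕ) :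
    Matrix (Fin N) (Fin N) ℝ :=
  fun i h =>
    -((lagrangeBasisPoly adag N ((h : ℕ) + 1)).derivative.eval (chebNode adag N ((i : ℕ) + 1)))
    + (∫ a in (0:ℝ)..adag,
        β a * Pi0 μ0 a * (lagrangeBasisPoly adag N ((h : ℕ) + 1)).derivative.eval a)
    - ∫ a in (0:ℝ)..(chebNode adag N ((i : ℕ) + 1)),
        μ1 a * (lagrangeBasisPoly adag N ((h : ℕ) + 1)).derivative.eval a

/-- A collocation solution with right-hand side `α`: a complex polynomial of degree at
most `N−1` with `q_N(a_i) + ∫_0^{a_i} (γ + μ1(s)) q_N(s) ds = α` at all Chebyshev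
nodes. -/
def IsCollocationSolution (adag : ℝ) (μ1 : ℝ → ℝ) (γ α : ℂ) (N : ℕ)
    (q : Polynomial ℂ) : Prop :=
  q.degree < (N : ℕ) ∧
  ∀ i ∈ Finset.Icc 1 N,
    q.eval ((chebNode adag N i : ℝ) : ℂ)
      + ∫ s in (0:ℝ)..(chebNode adag N i), (γ + (μ1 s : ℂ)) * q.eval ((s : ℝ) : ℂ) = α

open Polynomial Set Real

theorem exists_mem_ne_zero_map_eq_smul_iff {K V W : Type*} [Field K] [AddCommGroup V]
    [Module K V] [AddCommGroup W] [Module K W] {p : Submodule K V} {L : V →ₗ[K] W}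
    {B : V →ₗ[K] K} {w : W} {q₀ : V} (hq₀ : q₀ ∈ p) (hLq₀ : L q₀ = w)
    (huniq : ∀ q ∈ p, L q = w → q = q₀) :
    (∃ q ∈ p, q ≠ 0 ∧ L q = B q • w) ↔ B q₀ = 1 := by
  constructor
  · rintro ⟨q, hq, hq0, hLq⟩
    by_cases hBq : B q = 0
    · have : q₀ + q = q₀ := huniq _ (p.add_mem hq₀ hq) (by simp [hLq₀, hLq, hBq])
      exact absurd (add_eq_left.mp this) hq0
    · have : (B q)⁻¹ • q = q₀ :=
        huniq _ (p.smul_mem _ hq) (by simp [hLq, smul_smul, inv_mul_cancel₀ hBq])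
      simp [← this, inv_mul_cancel₀ hBq]
  · intro hBq₀
    exact ⟨q₀, hq₀, fun h => by simp [h] at hBq₀, by rw [hBq₀, one_smul, hLq₀]⟩

section Nodes

variable {adag : ℝ} {N : ℕ}

lemma chebAngle_mem_Ioo {i : ℕ} (h1 : 1 ≤ i) (hiN : i ≤ N) :
    (2 * (i : ℝ) - 1) * π / (2 * N) ∈ Ioo 0 π := by
  have hi : (1 : ℝ) ≤ i := by exact_mod_cast h1
  have hiN' : (i : ℝ) ≤ N := by exact_mod_cast hiN
  have hπ := pi_pos
  constructor
  · apply div_pos <;> nlinarith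
  · rw [div_lt_iff₀ (by linarith)]; nlinarith

lemma chebAngle_lt {i j : ℕ} (hij : i < j) (hN : 1 ≤ N) :
    (2 * (i : ℝ) - 1) * π / (2 * N) < (2 * (j : ℝ) - 1) * π / (2 * N) := by
  have hij' : (i : ℝ) < j := by exact_mod_cast hij
  have hN' : (1 : ℝ) ≤ N := by exact_mod_cast hN
  rw [div_lt_div_iff_of_pos_right (by linarith)]
  nlinarith [pi_pos]

lemma chebNode_mem_Ioo (hadag : 0 < adag) {i : ℕ} (h1 : 1 ≤ i) (hiN : i ≤ N) :
    chebNode adag N i ∈ Ioo 0 adag := by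
  have hθ := chebAngle_mem_Ioo h1 hiN
  have hcos : cos ((2 * (i : ℝ) - 1) * π / (2 * N)) ∈ Ioo (-1) 1 := by
    have h0 := strictAntiOn_cos (left_mem_Icc.2 pi_pos.le) (Ioo_subset_Icc_self hθ) hθ.1
    have hπ := strictAntiOn_cos (Ioo_subset_Icc_self hθ) (right_mem_Icc.2 pi_pos.le) hθ.2
    rw [cos_zero] at h0
    rw [cos_pi] at hπ
    exact ⟨hπ, h0⟩
  unfold chebNode
  constructor <;> nlinarith [hcos.1, hcos.2]

lemma chebNode_lt_chebNode (hadag : 0 < adag) {i j : ℕ} (h1 : 1 ≤ i) (hij : i < j)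
    (hjN : j ≤ N) : chebNode adag N j < chebNode adag N i := by
  have hcos : cos ((2 * (j : ℝ) - 1) * π / (2 * N)) <
      cos ((2 * (i : ℝ) - 1) * π / (2 * N)) :=
    strictAntiOn_cos (Ioo_subset_Icc_self (chebAngle_mem_Ioo h1 (by omega)))
      (Ioo_subset_Icc_self (chebAngle_mem_Ioo (by omega) hjN)) (chebAngle_lt hij (by omega))
  unfold chebNode
  nlinarith

lemma injOn_allNodes (hadag : 0 < adag) :
    InjOn (allNodes adag N) (Finset.range (N + 1)) := by
  have key : ∀ i j, i < j → j < N + 1 → allNodes adag N i ≠ allNodes adag N j := by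
    intro i j hij hj
    have hj0 : j ≠ 0 := by omega
    rcases Nat.eq_zero_or_pos i with rfl | hi
    · simpa [allNodes, hj0] using (chebNode_mem_Ioo hadag (N := N) (by omega) (by omega)).1.ne
    · simpa [allNodes, hj0, hi.ne'] using (chebNode_lt_chebNode hadag hi hij (by omega)).ne'
  intro i hi j hj hij
  simp only [Finset.coe_range, mem_Iio] at hi hj
  rcases lt_trichotomy i j with h | h | h
  · exact absurd hij (key i j h hj)
  · exact h
  · exact absurd hij.symm (key j i h hi)

end Nodes

lemma integral_derivative_eval (p : ℂ[X]) (a b : ℝ) :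
    ∫ x in a..b, p.derivative.eval (x : ℂ) = p.eval (b : ℂ) - p.eval (a : ℂ) :=
  intervalIntegral.integral_eq_sub_of_hasDerivAt (fun x _ => (p.hasDerivAt (x : ℂ)).comp_ofReal)
    ((p.derivative.continuous.comp Complex.continuous_ofReal).intervalIntegrable a b)

lemma eval_map_ofReal (p : ℝ[X]) (x : ℝ) :
    (p.map (algebraMap ℝ ℂ)).eval (x : ℂ) = ((p.eval x : ℝ) : ℂ) := by
  rw [eval_map_algebraMap]
  exact (Polynomial.ofReal_eval p x).symm

section Interpolation

variable {adag : ℝ} {N : ℕ}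

noncomputable def complexLagrangeBasisPoly (adag : ℝ) (N h : ℕ) : ℂ[X] :=
  (lagrangeBasisPoly adag N h).map (algebraMap ℝ ℂ)

lemma eval_complexLagrangeBasisPoly (hadag : 0 < adag) {h j : ℕ} (hh : h ≤ N) (hj : j ≤ N) :
    (complexLagrangeBasisPoly adag N h).eval (allNodes adag N j : ℂ) = if h = j then 1 else 0 := by
  have hs : ∀ {k}, k ≤ N → k ∈ Finset.range (N + 1) := fun hk => Finset.mem_range.2 (by omega)
  rw [complexLagrangeBasisPoly, eval_map_ofReal, lagrangeBasisPoly]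
  split_ifs with hhj
  · subst hhj
    simp [Lagrange.eval_basis_self (injOn_allNodes hadag) (hs hh)]
  · simp [Lagrange.eval_basis_of_ne hhj (hs hj)]

lemma degree_complexLagrangeBasisPoly (hadag : 0 < adag) {h : ℕ} (hh : h ≤ N) :
    (complexLagrangeBasisPoly adag N h).degree = N := by
  unfold complexLagrangeBasisPoly lagrangeBasisPoly
  rw [degree_map, Lagrange.degree_basis (injOn_allNodes hadag) (Finset.mem_range.2 (by omega))]
  simp

/-- The interpolant of the values `0, v₀, …, v_{N-1}` at the nodes `a₀, a₁, …, a_N`. -/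
noncomputable def nodalInterpolant (adag : ℝ) (N : ℕ) : (Fin N → ℂ) →ₗ[ℂ] ℂ[X] :=
  Fintype.linearCombination ℂ fun h : Fin N => complexLagrangeBasisPoly adag N (h + 1)

noncomputable def collocationPoly (adag : ℝ) (N : ℕ) : (Fin N → ℂ) →ₗ[ℂ] ℂ[X] :=
  derivative ∘ₗ nodalInterpolant adag N

lemma eval_nodalInterpolant_zero (hadag : 0 < adag) (v : Fin N → ℂ) :
    (nodalInterpolant adag N v).eval 0 = 0 := by
  have h0 : ((allNodes adag N 0 : ℝ) : ℂ) = 0 := by simp [allNodes]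
  conv_lhs => rw [← h0]
  simp [nodalInterpolant, Fintype.linearCombination_apply, eval_finsetSum,
    eval_complexLagrangeBasisPoly hadag (Nat.succ_le_of_lt _) (Nat.zero_le N)]

lemma eval_nodalInterpolant_chebNode (hadag : 0 < adag) (v : Fin N → ℂ) (i : Fin N) :
    (nodalInterpolant adag N v).eval (chebNode adag N (i + 1) : ℂ) = v i := by
  have hi : chebNode adag N (i + 1) = allNodes adag N (i + 1) := by simp [allNodes]
  simp [nodalInterpolant, Fintype.linearCombination_apply, eval_finsetSum, hi,
    eval_complexLagrangeBasisPoly hadag (Nat.succ_le_of_lt _) (Nat.succ_le_of_lt i.isLt),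
    Fin.val_inj]

lemma integral_collocationPoly (hadag : 0 < adag) (v : Fin N → ℂ) (i : Fin N) :
    ∫ s in (0 : ℝ)..chebNode adag N (i + 1), (collocationPoly adag N v).eval (s : ℂ) = v i := by
  simp [collocationPoly, integral_derivative_eval, eval_nodalInterpolant_chebNode hadag,
    eval_nodalInterpolant_zero hadag]

lemma collocationPoly_mem_degreeLT (hadag : 0 < adag) (v : Fin N → ℂ) :
    collocationPoly adag N v ∈ degreeLT ℂ N := by
  simp only [collocationPoly, nodalInterpolant, LinearMap.comp_apply,
    Fintype.linearCombination_apply, map_sum, map_smul]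
  refine Submodule.sum_mem _ fun h _ => Submodule.smul_mem _ _ (mem_degreeLT.2 ?_)
  have hne : complexLagrangeBasisPoly adag N (h + 1) ≠ 0 := by
    intro h0
    simpa [h0] using degree_complexLagrangeBasisPoly hadag (N := N) (Nat.succ_le_of_lt h.isLt)
  simpa [degree_complexLagrangeBasisPoly hadag (Nat.succ_le_of_lt h.isLt)] using
    degree_derivative_lt hne

lemma collocationPoly_injective (hadag : 0 < adag) :
    Function.Injective (collocationPoly adag N) := by
  refine (injective_iff_map_eq_zero _).2 fun v hv => funext fun i => ?_
  simpa [hv] using (integral_collocationPoly hadag v i).symm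

lemma exists_collocationPoly_eq (hadag : 0 < adag) {q : ℂ[X]} (hq : q ∈ degreeLT ℂ N) :
    ∃ v, collocationPoly adag N v = q := by
  let Q : (Fin N → ℂ) →ₗ[ℂ] degreeLT ℂ N :=
    (collocationPoly adag N).codRestrict _ (collocationPoly_mem_degreeLT hadag)
  have hQ : Function.Injective Q := fun v w h =>
    collocationPoly_injective hadag (congrArg Subtype.val h)
  have hrank : Module.finrank ℂ (Fin N → ℂ) = Module.finrank ℂ (degreeLT ℂ N) := by
    rw [(degreeLTEquiv ℂ N).finrank_eq]
  have : FiniteDimensional ℂ (degreeLT ℂ N) := (degreeLTEquiv ℂ N).symm.finiteDimensional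
  obtain ⟨v, hv⟩ := (LinearMap.injective_iff_surjective_of_finrank_eq_finrank hrank).1 hQ ⟨q, hq⟩
  exact ⟨v, congrArg Subtype.val hv⟩

end Interpolation

section WeightedIntegral

noncomputable def weightedIntegral (f : ℝ → ℂ) (a b : ℝ) (q : ℂ[X]) : ℂ :=
  ∫ s in a..b, f s * q.eval (s : ℂ)

variable {f : ℝ → ℂ} {a b : ℝ}

lemma IntervalIntegrable.mul_eval (hf : IntervalIntegrable f volume a b) (q : ℂ[X]) :
    IntervalIntegrable (fun s => f s * q.eval (s : ℂ)) volume a b :=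
  hf.mul_continuousOn (q.continuous.comp Complex.continuous_ofReal).continuousOn

lemma isLinearMap_weightedIntegral (hf : IntervalIntegrable f volume a b) :
    IsLinearMap ℂ (weightedIntegral f a b) where
  map_add p q := by
    simp only [weightedIntegral, eval_add, mul_add]
    exact intervalIntegral.integral_add (hf.mul_eval p) (hf.mul_eval q)
  map_smul c q := by
    simp only [weightedIntegral, eval_smul, smul_eq_mul, mul_left_comm _ c,
      intervalIntegral.integral_const_mul]

end WeightedIntegral

section Integrability

variable {adag : ℝ} {β μ0 μ1 : ℝ → ℝ}

lemma intervalIntegrable_ofReal_of_bounded {g : ℝ → ℝ} (hmeas : Measurable g)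
    (hnonneg : ∀ x, 0 ≤ g x) (hbdd : ∃ C, ∀ x, g x ≤ C) (a b : ℝ) :
    IntervalIntegrable (fun x => (g x : ℂ)) volume a b := by
  obtain ⟨C, hC⟩ := hbdd
  refine (intervalIntegrable_const (c := C)).mono_fun'
    (Complex.measurable_ofReal.comp hmeas).aestronglyMeasurable.restrict
    (Filter.Eventually.of_forall fun x => ?_)
  simpa [abs_of_nonneg (hnonneg x)] using hC x

lemma continuousOn_primitive_Ico
    (hμ0loc : ∀ b, 0 ≤ b → b < adag → IntegrableOn μ0 (Icc 0 b)) :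
    ContinuousOn (fun a => ∫ s in (0 : ℝ)..a, μ0 s) (Ico 0 adag) := by
  intro x hx
  obtain ⟨b, hxb, hb⟩ := exists_between hx.2
  have hb0 : 0 ≤ b := hx.1.trans hxb.le
  have hcont : ContinuousOn (fun a => ∫ s in (0 : ℝ)..a, μ0 s) (Icc 0 b) := by
    rw [← uIcc_of_le hb0]
    exact intervalIntegral.continuousOn_primitive_interval (by
      rw [uIcc_of_le hb0]; exact hμ0loc b hb0 hb)
  exact (hcont x ⟨hx.1, hxb.le⟩).mono_of_mem_nhdsWithin
    (mem_nhdsWithin.2 ⟨Iio b, isOpen_Iio, hxb, fun y hy => ⟨hy.2.1, hy.1.le⟩⟩)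

lemma Pi0_le_one (hμ0pos : ∀ a, 0 < μ0 a) {a : ℝ} (ha : 0 ≤ a) : Pi0 μ0 a ≤ 1 := by
  rw [Pi0, Real.exp_le_one_iff, neg_nonpos]
  exact intervalIntegral.integral_nonneg ha fun s _ => (hμ0pos s).le

lemma intervalIntegrable_ofReal_mul_Pi0 (hadag : 0 < adag) (hβmeas : Measurable β)
    (hβnonneg : ∀ a, 0 ≤ β a) (hβbdd : ∃ C, ∀ a, β a ≤ C) (hμ0pos : ∀ a, 0 < μ0 a)
    (hμ0loc : ∀ b, 0 ≤ b → b < adag → IntegrableOn μ0 (Icc 0 b)) :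
    IntervalIntegrable (fun a => ((β a * Pi0 μ0 a : ℝ) : ℂ)) volume 0 adag := by
  obtain ⟨C, hC⟩ := hβbdd
  have hPi0 : AEStronglyMeasurable (Pi0 μ0) (volume.restrict (uIoc 0 adag)) := by
    rw [uIoc_of_le hadag.le, Measure.restrict_congr_set Ico_ae_eq_Ioc.symm]
    exact (Real.continuous_exp.comp_continuousOn
      (continuousOn_primitive_Ico hμ0loc).neg).aestronglyMeasurable
      measurableSet_Ico
  refine (intervalIntegrable_const (c := C)).mono_fun'
    (Complex.continuous_ofReal.comp_aestronglyMeasurable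
      (hβmeas.aestronglyMeasurable.restrict.mul hPi0)) ?_
  filter_upwards [ae_restrict_mem measurableSet_uIoc] with a ha
  rw [uIoc_of_le hadag.le] at ha
  have hPi0_nonneg : 0 ≤ Pi0 μ0 a := (Real.exp_pos _).le
  calc ‖((β a * Pi0 μ0 a : ℝ) : ℂ)‖ = β a * Pi0 μ0 a := by
        simp [abs_of_nonneg (hβnonneg a), abs_of_nonneg hPi0_nonneg]
    _ ≤ β a * 1 := mul_le_mul_of_nonneg_left (Pi0_le_one hμ0pos ha.1.le) (hβnonneg a)
    _ ≤ C := by simpa using hC a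

end Integrability

section Collocation

variable {adag : ℝ} {β μ0 μ1 : ℝ → ℝ} {N : ℕ} {γ : ℂ}

noncomputable def collocationResidual (adag : ℝ) (μ1 : ℝ → ℝ) (γ : ℂ) (N : ℕ) (q : ℂ[X]) :
    Fin N → ℂ := fun i =>
  q.eval (chebNode adag N (i + 1) : ℂ) +
    weightedIntegral (fun s => γ + μ1 s) 0 (chebNode adag N (i + 1)) q

lemma isLinearMap_collocationResidual
    (hμ1 : ∀ a b, IntervalIntegrable (fun s => (μ1 s : ℂ)) volume a b) :
    IsLinearMap ℂ (collocationResidual adag μ1 γ N) where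
  map_add p q := funext fun i => by
    simp only [collocationResidual, eval_add, Pi.add_apply,
      (isLinearMap_weightedIntegral (intervalIntegrable_const.add (hμ1 _ _))).map_add]
    ring
  map_smul c q := funext fun i => by
    simp only [collocationResidual, eval_smul, Pi.smul_apply, smul_eq_mul,
      (isLinearMap_weightedIntegral (intervalIntegrable_const.add (hμ1 _ _))).map_smul]
    ring

lemma isCollocationSolution_iff {α : ℂ} {q : ℂ[X]} :
    IsCollocationSolution adag μ1 γ α N q ↔
      q ∈ degreeLT ℂ N ∧ collocationResidual adag μ1 γ N q = fun _ => α := by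
  simp only [IsCollocationSolution, mem_degreeLT, funext_iff, collocationResidual,
    weightedIntegral]
  refine and_congr_right fun _ =>
    ⟨fun h i => mod_cast h _ (Finset.mem_Icc.2 ⟨by omega, i.isLt⟩), fun h i hi => ?_⟩
  rw [Finset.mem_Icc] at hi
  obtain ⟨k, rfl⟩ : ∃ k : Fin N, i = k + 1 := ⟨⟨i - 1, by omega⟩, by simp only; omega⟩
  exact_mod_cast h k

lemma collocationPoly_apply (v : Fin N → ℂ) :
    collocationPoly adag N v = ∑ h, v h • (complexLagrangeBasisPoly adag N (h + 1)).derivative := by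
  simp [collocationPoly, nodalInterpolant, Fintype.linearCombination_apply]

lemma collocationMatrix_mulVec_apply
    (hβPi0 : IntervalIntegrable (fun a => ((β a * Pi0 μ0 a : ℝ) : ℂ)) volume 0 adag)
    (hμ1 : ∀ a b, IntervalIntegrable (fun s => (μ1 s : ℂ)) volume a b)
    (v : Fin N → ℂ) (i : Fin N) :
    ((collocationMatrix adag β μ0 μ1 N).map (fun x : ℝ => (x : ℂ))).mulVec v i =
      -(collocationPoly adag N v).eval (chebNode adag N (i + 1) : ℂ)
        + weightedIntegral (fun a => ((β a * Pi0 μ0 a : ℝ) : ℂ)) 0 adag (collocationPoly adag N v)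
        - weightedIntegral (fun s => (μ1 s : ℂ)) 0 (chebNode adag N (i + 1))
            (collocationPoly adag N v) := by
  let F : ℂ[X] →ₗ[ℂ] ℂ := -leval (chebNode adag N (i + 1) : ℂ)
    + IsLinearMap.mk' _ (isLinearMap_weightedIntegral hβPi0)
    - IsLinearMap.mk' _ (isLinearMap_weightedIntegral (hμ1 0 (chebNode adag N (i + 1))))
  have hentry : ∀ h, ((collocationMatrix adag β μ0 μ1 N i h : ℝ) : ℂ) =
      F (complexLagrangeBasisPoly adag N (h + 1)).derivative := fun h => by
    simp only [F, LinearMap.sub_apply, LinearMap.add_apply, LinearMap.neg_apply, leval_apply,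
      IsLinearMap.mk'_apply, collocationMatrix, weightedIntegral, complexLagrangeBasisPoly,
      derivative_map, eval_map_ofReal]
    push_cast
    rw [← intervalIntegral.integral_ofReal, ← intervalIntegral.integral_ofReal]
    push_cast
    rfl
  change _ = F (collocationPoly adag N v)
  simp [Matrix.mulVec, dotProduct, hentry, collocationPoly_apply, mul_comm]

lemma collocationMatrix_mulVec_eq_smul_iff (hadag : 0 < adag)
    (hβPi0 : IntervalIntegrable (fun a => ((β a * Pi0 μ0 a : ℝ) : ℂ)) volume 0 adag)
    (hμ1 : ∀ a b, IntervalIntegrable (fun s => (μ1 s : ℂ)) volume a b) (v : Fin N → ℂ) :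
    ((collocationMatrix adag β μ0 μ1 N).map (fun x : ℝ => (x : ℂ))).mulVec v = γ • v ↔
      collocationResidual adag μ1 γ N (collocationPoly adag N v) =
        weightedIntegral (fun a => ((β a * Pi0 μ0 a : ℝ) : ℂ)) 0 adag (collocationPoly adag N v)
          • 1 := by
  have hsplit : ∀ c (q : ℂ[X]), weightedIntegral (fun s => γ + μ1 s) 0 c q =
      γ * (∫ s in (0 : ℝ)..c, q.eval (s : ℂ)) + weightedIntegral (fun s => (μ1 s : ℂ)) 0 c q :=
    fun c q => by
      simp only [weightedIntegral, add_mul, ← intervalIntegral.integral_const_mul]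
      exact intervalIntegral.integral_add
        ((intervalIntegrable_const (c := γ)).mul_eval q) ((hμ1 0 c).mul_eval q)
  simp only [funext_iff, Pi.smul_apply, smul_eq_mul, Pi.one_apply, mul_one,
    collocationMatrix_mulVec_apply hβPi0 hμ1, collocationResidual, hsplit]
  refine forall_congr' fun i => ?_
  rw [integral_collocationPoly hadag v i]
  constructor <;> intro h <;> linear_combination -h

lemma exists_collocationMatrix_eigenvector_iff (hadag : 0 < adag)
    (hβPi0 : IntervalIntegrable (fun a => ((β a * Pi0 μ0 a : ℝ) : ℂ)) volume 0 adag)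
    (hμ1 : ∀ a b, IntervalIntegrable (fun s => (μ1 s : ℂ)) volume a b) :
    (∃ v : Fin N → ℂ, v ≠ 0 ∧
        ((collocationMatrix adag β μ0 μ1 N).map (fun x : ℝ => (x : ℂ))).mulVec v = γ • v) ↔
      ∃ q ∈ degreeLT ℂ N, q ≠ 0 ∧ collocationResidual adag μ1 γ N q =
        weightedIntegral (fun a => ((β a * Pi0 μ0 a : ℝ) : ℂ)) 0 adag q • 1 := by
  constructor
  · rintro ⟨v, hv, heig⟩
    refine ⟨collocationPoly adag N v, collocationPoly_mem_degreeLT hadag v, fun h => hv ?_,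
      (collocationMatrix_mulVec_eq_smul_iff hadag hβPi0 hμ1 v).1 heig⟩
    exact collocationPoly_injective hadag (h.trans (map_zero _).symm)
  · rintro ⟨q, hq, hq0, hres⟩
    obtain ⟨v, rfl⟩ := exists_collocationPoly_eq hadag hq
    exact ⟨v, fun h => hq0 (by simp [h]),
      (collocationMatrix_mulVec_eq_smul_iff hadag hβPi0 hμ1 v).2 hres⟩

end Collocation

theorem discrete_characteristic_equation_general
    (adag : ℝ) (hadag : 0 < adag) (β μ0 μ1 : ℝ → ℝ)
    (hβmeas : Measurable β) (hβnonneg : ∀ a, 0 ≤ β a) (hβbdd : ∃ C, ∀ a, β a ≤ C)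
    (hμ0pos : ∀ a, 0 < μ0 a)
    (hμ0loc : ∀ b, 0 ≤ b → b < adag → IntegrableOn μ0 (Set.Icc 0 b))
    (hμ1meas : Measurable μ1) (hμ1nonneg : ∀ a, 0 ≤ μ1 a) (hμ1bdd : ∃ C, ∀ a, μ1 a ≤ C)
    (N : ℕ) (γ : ℂ) (qN : Polynomial ℂ)
    (hqN : IsCollocationSolution adag μ1 γ 1 N qN)
    (hqNuniq : ∀ q' : Polynomial ℂ, IsCollocationSolution adag μ1 γ 1 N q' → q' = qN) :
    (∃ v : Fin N → ℂ, v ≠ 0 ∧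
        ((collocationMatrix adag β μ0 μ1 N).map (fun x : ℝ => (x : ℂ))).mulVec v = γ • v)
      ↔ (∫ a in (0:ℝ)..adag, ((β a * Pi0 μ0 a : ℝ) : ℂ) * qN.eval ((a : ℝ) : ℂ)) = 1 := by
  have hμ1 := intervalIntegrable_ofReal_of_bounded hμ1meas hμ1nonneg hμ1bdd
  have hβPi0 := intervalIntegrable_ofReal_mul_Pi0 hadag hβmeas hβnonneg hβbdd hμ0pos hμ0loc
  rw [exists_collocationMatrix_eigenvector_iff hadag hβPi0 hμ1]
  rw [isCollocationSolution_iff] at hqN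
  exact exists_mem_ne_zero_map_eq_smul_iff
    (L := IsLinearMap.mk' _ (isLinearMap_collocationResidual hμ1))
    (B := IsLinearMap.mk' _ (isLinearMap_weightedIntegral hβPi0)) hqN.1 hqN.2
    fun q hq hres => hqNuniq q (isCollocationSolution_iff.2 ⟨hq, hres⟩)

/-- If the collocation problem with right-hand side `1` has the unique
solution `q_N(·;γ,1)`, then `γ` is an eigenvalue of the collocation matrix `K_N` if and
only if the discrete characteristic equation `K̂_N(γ) = ∫_0^{a†} β Π0 q_N(·;γ,1) = 1`
holds. -/
theorem discrete_characteristic_equation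
    (adag : ℝ) (hadag : 0 < adag) (β μ0 μ1 : ℝ → ℝ)
    (hβmeas : Measurable β) (hβnonneg : ∀ a, 0 ≤ β a) (hβbdd : ∃ C, ∀ a, β a ≤ C)
    (hμ0pos : ∀ a, 0 < μ0 a)
    (hμ0loc : ∀ b, 0 ≤ b → b < adag → IntegrableOn μ0 (Set.Icc 0 b))
    (hμ0div : ¬ IntegrableOn μ0 (Set.Ico 0 adag))
    (hμ1meas : Measurable μ1) (hμ1nonneg : ∀ a, 0 ≤ μ1 a) (hμ1bdd : ∃ C, ∀ a, μ1 a ≤ C)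
    (N : ℕ) (γ : ℂ) (qN : Polynomial ℂ)
    (hqN : IsCollocationSolution adag μ1 γ 1 N qN)
    (hqNuniq : ∀ q' : Polynomial ℂ, IsCollocationSolution adag μ1 γ 1 N q' → q' = qN) :
    (∃ v : Fin N → ℂ, v ≠ 0 ∧
        ((collocationMatrix adag β μ0 μ1 N).map (fun x : ℝ => (x : ℂ))).mulVec v = γ • v)
      ↔ (∫ a in (0:ℝ)..adag, ((β a * Pi0 μ0 a : ℝ) : ℂ) * qN.eval ((a : ℝ) : ℂ)) = 1 :=
  discrete_characteristic_equation_general adag hadag β μ0 μ1 hβmeas hβnonneg hβbdd hμ0pos hμ0loc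
    hμ1meas hμ1nonneg hμ1bdd N γ qN hqN hqNuniq
end
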